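/- arXiv:2007.10292 — 2 statements merged into one kernel-verified Lean document; each statement's English description precedes it below -/
import Mathlib

section
/- For all q > 0, all integers k ≥ 2, and all j with 1 ≤ j ≤ k-1, one has [n-k]_q[n+k-1]_q ≤ [n-k+j]_q[n+k-j-1]_q for every n ≥ k. -/
open Finset Filter Topology

/-- The q-integer `[m]_q = 1 + q + ... + q^{m-1}`, with `[0]_q = 0`. -/
noncomputable def qInt (q : ℝ) (m : ℕ) : ℝ := ∑ i ∈ Finset.range m, q ^ i

/-- The q-factorial `[n]_q! = [1]_q [2]_q ⋯ [n]_q`. -/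
noncomputable def qFact (q : ℝ) (n : ℕ) : ℝ := ∏ i ∈ Finset.range n, qInt q (i + 1)

/-- The q-binomial coefficient `[n]_q!/([k]_q! [n-k]_q!)` (zero if `k > n`). -/
noncomputable def qBinom (q : ℝ) (n k : ℕ) : ℝ :=
  if k ≤ n then qFact q n / (qFact q k * qFact q (n - k)) else 0

/-- The q-Stirling number of the second kind. -/
noncomputable def qStirling (q : ℝ) (k r : ℕ) : ℝ :=
  (1 / (qFact q r * q ^ (r * (r - 1) / 2))) *
    ∑ i ∈ Finset.range (r + 1),
      (-1 : ℝ) ^ i * q ^ (i * (i - 1) / 2) * qBinom q r i * (qInt q (r - i)) ^ k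

/-- The q-forward difference operator on sequences:
`Δ_q^0 f_i = f_i`, `Δ_q^{r+1} f_i = Δ_q^r f_{i+1} - q^r Δ_q^r f_i`. -/
noncomputable def qDiff (q : ℝ) : ℕ → (ℕ → ℝ) → ℕ → ℝ
  | 0, f, i => f i
  | r + 1, f, i => qDiff q r f (i + 1) - q ^ r * qDiff q r f i

/-- The eigenvalues `λ_{k,q}^{(α,n)}` of the (α,q)-Bernstein operator. -/
noncomputable def lamEig (q α : ℝ) (n k : ℕ) : ℝ :=
  q ^ (k * (k - 1) / 2) * qFact q (n - 2) / (qFact q (n - k) * (qInt q n) ^ k) *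
    ((1 - α) * qInt q (n - k) * qInt q (n - 1 + k) + α * qInt q n * qInt q (n - 1))

/-- The coefficients `a_{n,q}(r,k)` of `T_{n,q,α}(t^k; x) = Σ_r a_{n,q}(r,k) x^r`. -/
noncomputable def aCoef (q α : ℝ) (n r k : ℕ) : ℝ :=
  q ^ (r * (r - 1) / 2) * qFact q (n - 2) / ((qInt q n) ^ k * qFact q (n - r)) *
    ((1 - α) * qInt q (n - r) *
        (qInt q (n + r - 1) * qStirling q (k + 1) (r + 1) -
          qInt q (r + 1) * qInt q (n - 1) * qStirling q k (r + 1)) +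
      α * qInt q n * qInt q (n - 1) * qStirling q k r)

/-- The (α,q)-Bernstein operator, via its forward-difference representation
`T_{n,q,α}(f;x) = Σ_{r=0}^n ((1-α) C_q(n-1,r) Δ_q^r g_0 + α C_q(n,r) Δ_q^r f_0) x^r`,
where `f_i = f([i]_q/[n]_q)` and
`g_i = (1 - q^{n-i-1}[i]_q/[n-1]_q) f_i + (q^{n-i-1}[i]_q/[n-1]_q) f_{i+1}`. -/
noncomputable def Talpha (q α : ℝ) (n : ℕ) (f : ℝ → ℝ) (x : ℝ) : ℝ :=
  let fs : ℕ → ℝ := fun i => f (qInt q i / qInt q n)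
  let gs : ℕ → ℝ := fun i =>
    (1 - q ^ (n - i - 1) * qInt q i / qInt q (n - 1)) * fs i +
      (q ^ (n - i - 1) * qInt q i / qInt q (n - 1)) * fs (i + 1)
  ∑ r ∈ Finset.range (n + 1),
    ((1 - α) * qBinom q (n - 1) r * qDiff q r gs 0 + α * qBinom q n r * qDiff q r fs 0) * x ^ r

/-
Write `[m + p] = [m] + q^m [p]`. Expanding `[a][b + j]` and `[a + j][b]` this way, both contain
`[a][b]`, and the remaining terms compare as `q^b [a] [j] ≤ q^a [b] [j]`; the latter holds for
`a ≤ b` because `q^a [b] - q^b [a] = q^a [b - a]`.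
-/

theorem qInt_add (q : ℝ) (m p : ℕ) : qInt q (m + p) = qInt q m + q ^ m * qInt q p := by
  simp only [qInt, Finset.sum_range_add, Finset.mul_sum, pow_add]

theorem qInt_nonneg {q : ℝ} (hq : 0 ≤ q) (m : ℕ) : 0 ≤ qInt q m :=
  Finset.sum_nonneg fun i _ => pow_nonneg hq i

theorem pow_mul_qInt_le_pow_mul_qInt {q : ℝ} (hq : 0 ≤ q) {a b : ℕ} (hab : a ≤ b) :
    q ^ b * qInt q a ≤ q ^ a * qInt q b := by
  obtain ⟨d, rfl⟩ := Nat.exists_eq_add_of_le hab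
  have hd : 0 ≤ q ^ a * qInt q d := mul_nonneg (pow_nonneg hq a) (qInt_nonneg hq d)
  rw [add_comm a d, qInt_add, pow_add]
  linarith

theorem qInt_mul_qInt_add_le {q : ℝ} (hq : 0 ≤ q) {a b : ℕ} (hab : a ≤ b) (j : ℕ) :
    qInt q a * qInt q (b + j) ≤ qInt q (a + j) * qInt q b := by
  rw [qInt_add q b, qInt_add q a]
  calc qInt q a * (qInt q b + q ^ b * qInt q j)
      = qInt q a * qInt q b + q ^ b * qInt q a * qInt q j := by ring
    _ ≤ qInt q a * qInt q b + q ^ a * qInt q b * qInt q j :=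
        add_le_add_right
          (mul_le_mul_of_nonneg_right (pow_mul_qInt_le_pow_mul_qInt hq hab) (qInt_nonneg hq j)) _
    _ = (qInt q a + q ^ a * qInt q j) * qInt q b := by ring

theorem qInt_prod_le_general (q : ℝ) (hq : 0 < q) (k j : ℕ) (hk : 2 ≤ k)
    (hj : j ≤ k - 1) :
    ∀ n : ℕ, k ≤ n →
      qInt q (n - k) * qInt q (n + k - 1) ≤ qInt q (n - k + j) * qInt q (n + k - j - 1) := by
  intro n hn
  have h := qInt_mul_qInt_add_le hq.le (a := n - k) (b := n + k - j - 1) (by omega) j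
  rwa [show n + k - j - 1 + j = n + k - 1 by omega] at h

theorem qInt_prod_le (q : ℝ) (hq : 0 < q) (k j : ℕ) (hk : 2 ≤ k) (hj1 : 1 ≤ j)
    (hj : j ≤ k - 1) :
    ∀ n : ℕ, k ≤ n →
      qInt q (n - k) * qInt q (n + k - 1) ≤ qInt q (n - k + j) * qInt q (n + k - j - 1) :=
  qInt_prod_le_general q hq k j hk hj
end

section
/- The monic eigenvector p_{2,q}^{(α,n)}(x) of T_{n,q,α} corresponding to λ_{2,q}^{(α,n)} equals x^2 - x for all n ≥ 2, all q > 0, and all α ∈ [0,1]. -/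
open Finset Filter Topology

/-!
`T_{n,q,α} f = (1 - α) B_{n-1}(g) + α B_n(f)`, where `B_m` is the `q`-Bernstein polynomial in
`q`-Newton form `Σ_r C_q(m,r) Δ_q^r u_0 x^r`. For `f(t) = t^2 - t` both node sequences `f_i` and
`g_i` are quadratic polynomials in the `q`-integer `[i]_q` (for `g_i` because
`f_{i+1} - f_i` carries the factor `q^i`, which cancels the `q^{n-i-1}` in the weight), and
`Δ_q^3` annihilates such sequences. So `T_{n,q,α}(t^2 - t)` is an explicit quadratic in `x`
without constant term, and matching its coefficients against `λ_{2,q}^{(α,n)}` is an identity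
between `q`-integers, using `[m+1]_q = q [m]_q + 1` and `q^m = (q - 1) [m]_q + 1`.
-/

lemma qInt_zero (q : ℝ) : qInt q 0 = 0 := sum_range_zero _

lemma qInt_succ (q : ℝ) (m : ℕ) : qInt q (m + 1) = q * qInt q m + 1 := geom_sum_succ

lemma qInt_succ' (q : ℝ) (m : ℕ) : qInt q (m + 1) = qInt q m + q ^ m := sum_range_succ _ _

lemma qInt_pos {q : ℝ} (hq : 0 < q) {m : ℕ} (hm : m ≠ 0) : 0 < qInt q m :=
  sum_pos (fun i _ => pow_pos hq i) (nonempty_range_iff.mpr hm)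

lemma qFact_pos {q : ℝ} (hq : 0 < q) (n : ℕ) : 0 < qFact q n :=
  prod_pos fun i _ => qInt_pos hq i.succ_ne_zero

lemma qFact_succ (q : ℝ) (n : ℕ) : qFact q (n + 1) = qFact q n * qInt q (n + 1) :=
  prod_range_succ _ _

lemma qFact_zero (q : ℝ) : qFact q 0 = 1 := prod_range_zero _

lemma qFact_one (q : ℝ) : qFact q 1 = 1 := by
  rw [qFact_succ, qFact_zero, qInt_succ, qInt_zero]; ring

lemma qFact_two (q : ℝ) : qFact q 2 = 1 + q := by
  rw [qFact_succ, qFact_one, qInt_succ, qInt_succ, qInt_zero]; ring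

lemma qBinom_of_lt {q : ℝ} {m k : ℕ} (h : m < k) : qBinom q m k = 0 :=
  if_neg (not_le.mpr h)

lemma qBinom_zero {q : ℝ} (hq : 0 < q) (m : ℕ) : qBinom q m 0 = 1 := by
  rw [qBinom, if_pos m.zero_le, qFact_zero, Nat.sub_zero, one_mul, div_self (qFact_pos hq m).ne']

lemma qBinom_one {q : ℝ} (hq : 0 < q) (m : ℕ) : qBinom q m 1 = qInt q m := by
  cases m with
  | zero => rw [qBinom_of_lt Nat.zero_lt_one, qInt_zero]
  | succ k =>
    rw [qBinom, if_pos (by omega), Nat.add_sub_cancel, qFact_succ, qFact_one]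
    field_simp [(qFact_pos hq k).ne']

lemma qBinom_two {q : ℝ} (hq : 0 < q) (m : ℕ) :
    qBinom q m 2 = qInt q m * qInt q (m - 1) / (1 + q) := by
  match m with
  | 0 => rw [qBinom_of_lt (by omega), qInt_zero]; ring
  | 1 => rw [qBinom_of_lt (by omega), Nat.sub_self, qInt_zero]; ring
  | k + 2 =>
    rw [qBinom, if_pos (by omega), Nat.add_sub_cancel, Nat.add_sub_assoc (by omega),
      qFact_succ, qFact_succ, qFact_two]
    field_simp [(qFact_pos hq k).ne']

lemma qDiff_succ (q : ℝ) (r : ℕ) (u : ℕ → ℝ) (i : ℕ) :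
    qDiff q (r + 1) u i = qDiff q r u (i + 1) - q ^ r * qDiff q r u i := rfl

lemma qDiff_congr {q : ℝ} {r : ℕ} {u v : ℕ → ℝ} {i : ℕ}
    (h : ∀ j ≤ r, u (i + j) = v (i + j)) : qDiff q r u i = qDiff q r v i := by
  induction r generalizing i with
  | zero => simpa [qDiff] using h 0 le_rfl
  | succ r ih =>
    rw [qDiff_succ, qDiff_succ, ih (fun j hj => h j (by omega)),
      ih fun j hj => by rw [show i + 1 + j = i + (j + 1) by omega]; exact h (j + 1) (by omega)]

noncomputable def qQuadratic (q a b c : ℝ) (j : ℕ) : ℝ := a * qInt q j ^ 2 + b * qInt q j + c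

lemma qDiff_three_qQuadratic (q a b c : ℝ) (i : ℕ) : qDiff q 3 (qQuadratic q a b c) i = 0 := by
  simp only [qDiff, qQuadratic, qInt_succ]
  ring

lemma qDiff_qQuadratic_of_three_le (q a b c : ℝ) {r : ℕ} (hr : 3 ≤ r) (i : ℕ) :
    qDiff q r (qQuadratic q a b c) i = 0 := by
  induction r, hr using Nat.le_induction generalizing i with
  | base => exact qDiff_three_qQuadratic q a b c i
  | succ r _ ih => rw [qDiff_succ, ih, ih, mul_zero, sub_zero]

noncomputable def qBernstein (q : ℝ) (m : ℕ) (u : ℕ → ℝ) (x : ℝ) : ℝ :=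
  ∑ r ∈ range (m + 1), qBinom q m r * qDiff q r u 0 * x ^ r

lemma qBernstein_eq_sum_range {q : ℝ} {m N : ℕ} (hN : m + 1 ≤ N) (u : ℕ → ℝ) (x : ℝ) :
    qBernstein q m u x = ∑ r ∈ range N, qBinom q m r * qDiff q r u 0 * x ^ r := by
  refine sum_subset (range_subset_range.mpr hN) fun r _ hr => ?_
  rw [qBinom_of_lt (by simpa using hr), zero_mul, zero_mul]

lemma qBernstein_congr {q : ℝ} {m : ℕ} {u v : ℕ → ℝ} (h : ∀ j ≤ m, u j = v j) (x : ℝ) :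
    qBernstein q m u x = qBernstein q m v x :=
  sum_congr rfl fun r hr => by
    rw [qDiff_congr (u := u) (v := v) fun j hj => h _ (by rw [mem_range] at hr; omega)]

lemma qBernstein_qQuadratic {q : ℝ} (hq : 0 < q) (m : ℕ) (a b c x : ℝ) :
    qBernstein q m (qQuadratic q a b c) x =
      c + qInt q m * (a + b) * x + q * qInt q m * qInt q (m - 1) * a * x ^ 2 := by
  have htail : ∑ r ∈ range m, qBinom q m (3 + r) * qDiff q (3 + r) (qQuadratic q a b c) 0 *
      x ^ (3 + r) = 0 :=
    sum_eq_zero fun r _ => by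
      rw [qDiff_qQuadratic_of_three_le q a b c (Nat.le_add_right 3 r), mul_zero, zero_mul]
  rw [qBernstein_eq_sum_range (N := 3 + m) (by omega), sum_range_add, htail, add_zero,
    sum_range_succ, sum_range_succ, sum_range_one, qBinom_zero hq, qBinom_one hq, qBinom_two hq]
  simp only [qDiff, qQuadratic, qInt_succ, qInt_zero]
  field_simp
  ring

/-- The sequence `g_i` in the definition of `Talpha`, with `u` in place of `f_i`. -/
noncomputable def qMix (q : ℝ) (n : ℕ) (u : ℕ → ℝ) (i : ℕ) : ℝ :=
  (1 - q ^ (n - i - 1) * qInt q i / qInt q (n - 1)) * u i +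
    (q ^ (n - i - 1) * qInt q i / qInt q (n - 1)) * u (i + 1)

lemma qMix_qQuadratic (q a b c : ℝ) {n i : ℕ} (hi : i < n) :
    qMix q n (qQuadratic q a b c) i =
      qQuadratic q (a * (1 + q ^ (n - 1) * (1 + q) / qInt q (n - 1)))
        (b + q ^ (n - 1) * (a + b) / qInt q (n - 1)) c i := by
  have hpow : q ^ (n - i - 1) * q ^ i = q ^ (n - 1) := by rw [← pow_add]; congr 1; omega
  have hstep : qQuadratic q a b c (i + 1) - qQuadratic q a b c i =
      q ^ i * (a * ((1 + q) * qInt q i + 1) + b) := by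
    have hsucc : qInt q i + q ^ i = q * qInt q i + 1 := by rw [← qInt_succ', qInt_succ]
    simp only [qQuadratic]
    rw [qInt_succ']
    linear_combination a * q ^ i * hsucc
  unfold qMix qQuadratic at hstep ⊢
  linear_combination q ^ (n - i - 1) * qInt q i / qInt q (n - 1) * hstep +
    qInt q i * (a * ((1 + q) * qInt q i + 1) + b) / qInt q (n - 1) * hpow

lemma Talpha_eq_qBernstein (q α : ℝ) (n : ℕ) (f : ℝ → ℝ) (x : ℝ) :
    Talpha q α n f x =
      (1 - α) * qBernstein q (n - 1) (qMix q n fun i => f (qInt q i / qInt q n)) x +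
        α * qBernstein q n (fun i => f (qInt q i / qInt q n)) x := by
  rw [qBernstein_eq_sum_range (N := n + 1) (by omega), qBernstein, mul_sum, mul_sum,
    ← sum_add_distrib]
  exact sum_congr rfl fun r _ => by unfold qMix; ring

lemma lamEig_two {q : ℝ} (hq : 0 < q) (α : ℝ) (m : ℕ) :
    lamEig q α (m + 2) 2 = q / qInt q (m + 2) ^ 2 *
      ((1 - α) * qInt q m * qInt q (m + 3) + α * qInt q (m + 2) * qInt q (m + 1)) := by
  rw [lamEig, show m + 2 - 2 = m from rfl, show m + 2 - 1 + 2 = m + 3 from rfl]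
  field_simp [(qFact_pos hq m).ne']
  norm_num

theorem eigenvector_k2_general (q α : ℝ) (hq : 0 < q) (n : ℕ) (hn : 2 ≤ n) :
    ∀ x : ℝ, Talpha q α n (fun t => t ^ 2 - t) x = lamEig q α n 2 * (x ^ 2 - x) := by
  obtain ⟨m, rfl⟩ : ∃ m, n = m + 2 := ⟨n - 2, by omega⟩
  intro x
  have hN : qInt q (m + 2) ≠ 0 := (qInt_pos hq (by omega)).ne'
  have hM : qInt q (m + 1) ≠ 0 := (qInt_pos hq (by omega)).ne'
  have hnodes : (fun i => (qInt q i / qInt q (m + 2)) ^ 2 - qInt q i / qInt q (m + 2)) =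
      qQuadratic q (1 / qInt q (m + 2) ^ 2) (-(1 / qInt q (m + 2))) 0 := by
    funext i
    simp only [qQuadratic]
    field_simp
    ring
  rw [Talpha_eq_qBernstein, hnodes,
    qBernstein_congr fun j hj => qMix_qQuadratic q _ _ _ (by omega : j < m + 2),
    qBernstein_qQuadratic hq, qBernstein_qQuadratic hq, lamEig_two hq]
  have hqm : q ^ m = qInt q m * (q - 1) + 1 := by rw [qInt, geom_sum_mul]; ring
  simp only [show m + 2 - 1 = m + 1 from rfl, Nat.add_sub_cancel]
  rw [pow_succ q m, hqm]
  field_simp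
  simp only [qInt_succ]
  ring

theorem eigenvector_k2 (q α : ℝ) (hq : 0 < q) (hα : α ∈ Set.Icc (0 : ℝ) 1)
    (n : ℕ) (hn : 2 ≤ n) :
    ∀ x : ℝ, Talpha q α n (fun t => t ^ 2 - t) x = lamEig q α n 2 * (x ^ 2 - x) :=
  eigenvector_k2_general q α hq n hn
end
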